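/- For every r ∈ (0,1) and every κ > 0, Σ_{k=0}^∞ k^κ·r^k ≤ (1/|log r|^κ)·(2·(κ/e)^κ + Γ(κ+1)/|log r|). -/

import Mathlib

open Real Set MeasureTheory Finset

/-! With `b = |log r|` the terms are `f k` for `f x = x ^ κ * exp (-(b * x))`, a function that
increases on `[0, κ / b]`, decreases afterwards and has maximum `(κ / e) ^ κ / b ^ κ` there.
For such a unimodal function the partial sums over `ℕ` are at most the integral over `(0, ∞)`
plus twice the maximum (the two terms next to the mode are not controlled by the integral), and
`∫₀^∞ f = Γ(κ + 1) / b ^ (κ + 1)`. -/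

theorem intervalIntegral_add_le_integral_Ioi {f : ℝ → ℝ} {a b c d : ℝ} (ha : 0 ≤ a)
    (hab : a ≤ b) (hbc : b ≤ c) (hcd : c ≤ d) (hf : ∀ x, 0 ≤ x → 0 ≤ f x)
    (hint : IntegrableOn f (Ioi 0)) :
    (∫ x in a..b, f x) + ∫ x in c..d, f x ≤ ∫ x in Ioi 0, f x := by
  have hii : ∀ p q : ℝ, 0 ≤ p → p ≤ q → IntervalIntegrable f volume p q := fun p q hp hpq =>
    (intervalIntegrable_iff_integrableOn_Ioc_of_le hpq).2
      (hint.mono_set (Ioc_subset_Ioi_self.trans (Ioi_subset_Ioi hp)))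
  have hnonneg : ∀ p q : ℝ, 0 ≤ p → 0 ≤ᵐ[volume.restrict (Ioc p q)] f := fun p q hp =>
    ae_restrict_of_forall_mem measurableSet_Ioc fun x hx => hf x (hp.trans hx.1.le)
  calc (∫ x in a..b, f x) + ∫ x in c..d, f x
      ≤ (∫ x in a..b, f x) + ∫ x in b..d, f x := by
        gcongr
        exact intervalIntegral.integral_mono_interval hbc hcd le_rfl
          (hnonneg b d (ha.trans hab)) (hii b d (ha.trans hab) (hbc.trans hcd))
    _ = ∫ x in Ioc a d, f x := by
        rw [intervalIntegral.integral_add_adjacent_intervals (hii a b ha hab)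
          (hii b d (ha.trans hab) (hbc.trans hcd)),
          intervalIntegral.integral_of_le (hab.trans (hbc.trans hcd))]
    _ ≤ ∫ x in Ioi 0, f x :=
        setIntegral_mono_set hint
          (ae_restrict_of_forall_mem measurableSet_Ioi fun x hx => hf x (le_of_lt hx))
          (Ioc_subset_Ioi_self.trans (Ioi_subset_Ioi ha)).eventuallyLE

theorem sum_range_le_two_mul_add_integral_Ioi {f : ℝ → ℝ} {c M : ℝ} (hc : 0 ≤ c)
    (hf : ∀ x, 0 ≤ x → 0 ≤ f x) (hfM : ∀ x, 0 ≤ x → f x ≤ M)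
    (hmono : MonotoneOn f (Icc 0 c)) (hanti : AntitoneOn f (Ici c))
    (hint : IntegrableOn f (Ioi 0)) (n : ℕ) :
    ∑ k ∈ range n, f k ≤ 2 * M + ∫ x in Ioi 0, f x := by
  set m := ⌊c⌋₊
  have hmc : (m : ℝ) ≤ c := Nat.floor_le hc
  have hcm : c ≤ m + 1 := (Nat.lt_floor_add_one c).le
  have hbelow : ∑ k ∈ range m, f k ≤ ∫ x in (0 : ℝ)..m, f x := by
    simpa using (hmono.mono (Icc_subset_Icc_right (by simpa using hmc))).sum_le_integral
      (x₀ := 0) (a := m)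
  have habove : ∑ i ∈ range n, f ↑(m + 2 + i) ≤ ∫ x in (m + 1 : ℝ)..m + 1 + n, f x := by
    have := (hanti.mono (Icc_subset_Ici_self.trans (Ici_subset_Ici.2 hcm))).sum_le_integral
      (x₀ := m + 1) (a := n)
    convert this using 3 with i
    push_cast
    ring
  have hintegrals := intervalIntegral_add_le_integral_Ioi (le_refl (0 : ℝ)) m.cast_nonneg
    (by linarith : (m : ℝ) ≤ m + 1) (by simp : (m + 1 : ℝ) ≤ m + 1 + n) hf hint
  calc ∑ k ∈ range n, f k ≤ ∑ k ∈ range (m + 2 + n), f k :=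
        sum_le_sum_of_subset_of_nonneg (range_subset_range.2 (by omega))
          fun k _ _ => hf k k.cast_nonneg
    _ = ∑ k ∈ range m, f k + (f m + f ↑(m + 1)) + ∑ i ∈ range n, f ↑(m + 2 + i) := by
        rw [sum_range_add, sum_range_succ, sum_range_succ, add_assoc (∑ k ∈ range m, f k)]
    _ ≤ (∫ x in (0 : ℝ)..m, f x) + 2 * M + ∫ x in (m + 1 : ℝ)..m + 1 + n, f x := by
        gcongr
        linarith [hfM m m.cast_nonneg, hfM _ (m + 1).cast_nonneg]
    _ ≤ 2 * M + ∫ x in Ioi 0, f x := by linarith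

section RpowMulExpNegMul

variable {κ b : ℝ}

/-- The tangent-line bound for the concave function `x ↦ κ log x - b x` at `y`. -/
theorem rpow_mul_exp_neg_mul_le (hκ : 0 < κ) {x y : ℝ} (hx : 0 ≤ x) (hy : 0 < y) :
    x ^ κ * exp (-(b * x)) ≤ y ^ κ * exp (-(b * y)) * exp ((κ / y - b) * (x - y)) := by
  rcases hx.eq_or_lt with rfl | hx
  · rw [zero_rpow hκ.ne', zero_mul]
    positivity
  have hlog : log x - log y ≤ x / y - 1 := by
    rw [← log_div hx.ne' hy.ne']
    exact log_le_sub_one_of_pos (by positivity)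
  have hexp : (κ / y - b) * (x - y) = κ * (x / y - 1) - b * (x - y) := by
    field_simp
  rw [rpow_def_of_pos hx, rpow_def_of_pos hy, ← exp_add, ← exp_add, ← exp_add, exp_le_exp, hexp]
  nlinarith [mul_le_mul_of_nonneg_left hlog hκ.le]

theorem rpow_mul_exp_neg_mul_le_div_rpow (hκ : 0 < κ) (hb : 0 < b) {x : ℝ} (hx : 0 ≤ x) :
    x ^ κ * exp (-(b * x)) ≤ (κ / exp 1) ^ κ / b ^ κ := by
  refine (rpow_mul_exp_neg_mul_le (b := b) hκ hx (div_pos hκ hb)).trans_eq ?_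
  rw [div_div_cancel₀ hκ.ne', sub_self, zero_mul, exp_zero, mul_one, mul_div_cancel₀ _ hb.ne',
    div_rpow hκ.le hb.le, div_rpow hκ.le (exp_pos 1).le, exp_one_rpow, exp_neg]
  ring

theorem monotoneOn_rpow_mul_exp_neg_mul (hκ : 0 < κ) (hb : 0 < b) :
    MonotoneOn (fun x => x ^ κ * exp (-(b * x))) (Icc 0 (κ / b)) := by
  intro x hx y hy hxy
  rcases hy.1.eq_or_lt with rfl | hy0
  · rw [le_antisymm hxy hx.1]
  refine (rpow_mul_exp_neg_mul_le hκ hx.1 hy0).trans (mul_le_of_le_one_right (by positivity) ?_)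
  have : b ≤ κ / y := (le_div_iff₀ hy0).2 (by linarith [(le_div_iff₀ hb).1 hy.2])
  exact exp_le_one_iff.2 (mul_nonpos_of_nonneg_of_nonpos (by linarith) (by linarith))

theorem antitoneOn_rpow_mul_exp_neg_mul (hκ : 0 < κ) (hb : 0 < b) :
    AntitoneOn (fun x => x ^ κ * exp (-(b * x))) (Ici (κ / b)) := by
  intro x hx y hy hxy
  have hx0 : 0 < x := (div_pos hκ hb).trans_le hx
  refine (rpow_mul_exp_neg_mul_le hκ (hx0.le.trans hxy) hx0).trans
    (mul_le_of_le_one_right (by positivity) ?_)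
  have : κ / x ≤ b := (div_le_iff₀ hx0).2 (by linarith [(div_le_iff₀ hb).1 hx])
  exact exp_le_one_iff.2 (mul_nonpos_of_nonpos_of_nonneg (by linarith) (by linarith))

theorem integrableOn_rpow_mul_exp_neg_mul (hκ : -1 < κ) (hb : 0 < b) :
    IntegrableOn (fun x => x ^ κ * exp (-(b * x))) (Ioi 0) := by
  simpa [neg_mul] using integrableOn_rpow_mul_exp_neg_mul_rpow hκ zero_lt_one hb

theorem integral_rpow_mul_exp_neg_mul_Ioi_eq_Gamma_div (hκ : -1 < κ) (hb : 0 < b) :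
    ∫ x in Ioi 0, x ^ κ * exp (-(b * x)) = Gamma (κ + 1) / b ^ (κ + 1) := by
  have := integral_rpow_mul_exp_neg_mul_Ioi (a := κ + 1) (by linarith) hb
  rw [add_sub_cancel_right] at this
  rw [this, div_rpow zero_le_one hb.le, one_rpow, one_div_mul_eq_div]

theorem sum_range_rpow_mul_exp_neg_mul_le (hκ : 0 < κ) (hb : 0 < b) (n : ℕ) :
    ∑ k ∈ range n, (k : ℝ) ^ κ * exp (-(b * k)) ≤
      2 * ((κ / exp 1) ^ κ / b ^ κ) + Gamma (κ + 1) / b ^ (κ + 1) := by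
  rw [← integral_rpow_mul_exp_neg_mul_Ioi_eq_Gamma_div (by linarith) hb]
  refine sum_range_le_two_mul_add_integral_Ioi (div_pos hκ hb).le
    (fun x hx => by positivity) (fun x hx => rpow_mul_exp_neg_mul_le_div_rpow hκ hb hx)
    (monotoneOn_rpow_mul_exp_neg_mul hκ hb) (antitoneOn_rpow_mul_exp_neg_mul hκ hb)
    (integrableOn_rpow_mul_exp_neg_mul (by linarith) hb) n

end RpowMulExpNegMul

/-- For every `r ∈ (0,1)` and every `κ > 0`,
`Σ_{k=0}^∞ k^κ r^k ≤ (1/|log r|^κ)(2(κ/e)^κ + Γ(κ+1)/|log r|)` (the sum is taken in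
`[0,∞]` so that no summability assumption is needed; `0^κ = 0` for `κ > 0`). -/
theorem statement19 (r : ℝ) (hr : r ∈ Set.Ioo (0 : ℝ) 1) (κ : ℝ) (hκ : 0 < κ) :
    ∑' k : ℕ, ENNReal.ofReal ((k : ℝ) ^ κ * r ^ k) ≤
      ENNReal.ofReal ((1 / |Real.log r| ^ κ) *
        (2 * (κ / Real.exp 1) ^ κ + Real.Gamma (κ + 1) / |Real.log r|)) := by
  obtain ⟨hr0, hr1⟩ := hr
  set b := |log r| with hb_def
  have hb : 0 < b := abs_pos.2 (log_neg hr0 hr1).ne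
  have hr_eq : exp (-b) = r := by rw [hb_def, abs_of_neg (log_neg hr0 hr1), neg_neg, exp_log hr0]
  have hterm : ∀ k : ℕ, (k : ℝ) ^ κ * r ^ k = (k : ℝ) ^ κ * exp (-(b * k)) := fun k => by
    rw [← hr_eq, ← exp_nat_mul, mul_neg, mul_comm (k : ℝ) b]
  refine ENNReal.tsum_le_of_sum_range_le fun n => ?_
  rw [← ENNReal.ofReal_sum_of_nonneg fun k _ => by positivity]
  refine ENNReal.ofReal_le_ofReal ?_
  calc ∑ k ∈ range n, (k : ℝ) ^ κ * r ^ k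
      = ∑ k ∈ range n, (k : ℝ) ^ κ * exp (-(b * k)) := sum_congr rfl fun k _ => hterm k
    _ ≤ 2 * ((κ / exp 1) ^ κ / b ^ κ) + Gamma (κ + 1) / b ^ (κ + 1) :=
        sum_range_rpow_mul_exp_neg_mul_le hκ hb n
    _ = 1 / b ^ κ * (2 * (κ / exp 1) ^ κ + Gamma (κ + 1) / b) := by
        rw [rpow_add_one hb.ne']
        field_simp
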